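/- arXiv:2508.04027 — 5 statements merged into one kernel-verified Lean document; each statement's English description precedes it below -/
import Mathlib

section
/- Let p be a homogeneous polynomial of degree d in n real variables, and let x, u ∈ ℝⁿ. Then for every 0 ≤ k ≤ d, the k-th directional derivative satisfies (D_u^k p)(x) = (k!/(d−k)!)·(D_x^{d−k} p)(u). -/
open MvPolynomial

namespace DDSwapAux

variable {n : ℕ}

/-- directional derivative operator -/
noncomputable def D (a : Fin n → ℝ) (q : MvPolynomial (Fin n) ℝ) : MvPolynomial (Fin n) ℝ :=
  ∑ i, MvPolynomial.C (a i) * MvPolynomial.pderiv i q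

/-- substitution `X i ↦ x i + t * u i` -/
noncomputable def phi (x u : Fin n → ℝ) : MvPolynomial (Fin n) ℝ →ₐ[ℝ] Polynomial ℝ :=
  MvPolynomial.aeval (fun i => Polynomial.C (x i) + Polynomial.X * Polynomial.C (u i))

lemma D_mul (a : Fin n → ℝ) (p q : MvPolynomial (Fin n) ℝ) :
    D a (p * q) = D a p * q + p * D a q := by
  simp only [D, MvPolynomial.pderiv_mul, mul_add, Finset.sum_add_distrib, Finset.sum_mul,
    Finset.mul_sum]
  congr 1 <;> exact Finset.sum_congr rfl (fun i _ => by ring)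

lemma D_add (a : Fin n → ℝ) (p q : MvPolynomial (Fin n) ℝ) :
    D a (p + q) = D a p + D a q := by
  simp [D, mul_add, Finset.sum_add_distrib]

lemma eval_phi (x u : Fin n → ℝ) (p : MvPolynomial (Fin n) ℝ) (s : ℝ) :
    (phi x u p).eval s = MvPolynomial.eval (fun i => x i + s * u i) p := by
  induction p using MvPolynomial.induction_on with
  | C c => simp [phi]
  | add p q hp hq => simp [map_add, hp, hq]
  | mul_X p i hp =>
      rw [map_mul, Polynomial.eval_mul, hp, map_mul]
      congr 1
      simp only [phi, MvPolynomial.aeval_X, Polynomial.eval_add, Polynomial.eval_mul,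
        Polynomial.eval_C, Polynomial.eval_X, MvPolynomial.eval_X]

lemma derivative_phi (x u : Fin n → ℝ) (p : MvPolynomial (Fin n) ℝ) :
    Polynomial.derivative (phi x u p) = phi x u (D u p) := by
  induction p using MvPolynomial.induction_on with
  | C c => simp [phi, D]
  | add p q hp hq => rw [map_add, Polynomial.derivative_add, hp, hq, D_add, map_add]
  | mul_X p i hp =>
      rw [D_mul, map_mul, Polynomial.derivative_mul, hp, map_add, map_mul]
      congr 1
      have : D u (X i : MvPolynomial (Fin n) ℝ) = MvPolynomial.C (u i) := by
        simp [D, MvPolynomial.pderiv_X, Pi.single_apply]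
      rw [this]
      simp only [phi, MvPolynomial.aeval_X, MvPolynomial.aeval_C,
        Polynomial.derivative_add, Polynomial.derivative_C, Polynomial.derivative_mul,
        Polynomial.derivative_X, zero_add, one_mul, mul_zero, add_zero]
      simp

lemma coeff_phi (x u : Fin n → ℝ) :
    ∀ (k : ℕ) (p : MvPolynomial (Fin n) ℝ),
      (k.factorial : ℝ) * (phi x u p).coeff k = MvPolynomial.eval x ((D u)^[k] p) := by
  intro k
  induction k with
  | zero =>
      intro p
      simp only [Nat.factorial_zero, Nat.cast_one, one_mul, Function.iterate_zero, id]
      rw [Polynomial.coeff_zero_eq_eval_zero, eval_phi]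
      simp
  | succ k ih =>
      intro p
      have h1 := ih (D u p)
      rw [← derivative_phi, Polynomial.coeff_derivative] at h1
      rw [Function.iterate_succ_apply, ← h1, Nat.factorial_succ]
      push_cast
      ring

lemma natDegree_phi_le (x u : Fin n → ℝ) (p : MvPolynomial (Fin n) ℝ) :
    (phi x u p).natDegree ≤ p.totalDegree := by
  conv_lhs => rw [p.as_sum, map_sum]
  apply Polynomial.natDegree_sum_le_of_forall_le
  intro m hm
  rw [phi, MvPolynomial.aeval_monomial]
  refine le_trans (Polynomial.natDegree_mul_le) ?_
  have h0 : (algebraMap ℝ (Polynomial ℝ) (MvPolynomial.coeff m p)).natDegree = 0 := by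
    simp [Polynomial.natDegree_C]
  rw [h0, zero_add]
  refine le_trans ?_ (MvPolynomial.le_totalDegree hm)
  rw [Finsupp.prod, Finsupp.sum]
  refine le_trans (Polynomial.natDegree_prod_le _ _) (Finset.sum_le_sum ?_)
  intro i _
  refine le_trans (Polynomial.natDegree_pow_le) ?_
  have : (Polynomial.C (x i) + Polynomial.X * Polynomial.C (u i)).natDegree ≤ 1 := by
    refine le_trans (Polynomial.natDegree_add_le _ _) ?_
    simp [Polynomial.natDegree_C]
    exact le_trans (Polynomial.natDegree_mul_le) (by simp)
  calc m i * (Polynomial.C (x i) + Polynomial.X * Polynomial.C (u i)).natDegree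
      ≤ m i * 1 := Nat.mul_le_mul_left _ this
    _ = m i := mul_one _

lemma eval_smul_of_homogeneous {d : ℕ} {p : MvPolynomial (Fin n) ℝ}
    (hp : p.IsHomogeneous d) (c : ℝ) (y : Fin n → ℝ) :
    MvPolynomial.eval (fun i => c * y i) p = c ^ d * MvPolynomial.eval y p := by
  rw [MvPolynomial.eval_eq, MvPolynomial.eval_eq, Finset.mul_sum]
  apply Finset.sum_congr rfl
  intro m hm
  have hdeg : ∑ i ∈ m.support, m i = d := by
    have := hp (MvPolynomial.mem_support_iff.mp hm)
    simpa [Finsupp.weight_apply, Finsupp.sum] using this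
  rw [← hdeg]
  simp only [mul_pow, Finset.prod_mul_distrib, Finset.prod_pow_eq_pow_sum]
  ring

lemma natDegree_reflect_le {d : ℕ} {q : Polynomial ℝ} (hq : q.natDegree ≤ d) :
    (Polynomial.reflect d q).natDegree ≤ d := by
  rw [Polynomial.natDegree_le_iff_coeff_eq_zero]
  intro j hj
  rw [Polynomial.coeff_reflect]
  show q.coeff (if j ≤ d then d - j else j) = 0
  rw [if_neg (by omega)]
  exact Polynomial.coeff_eq_zero_of_natDegree_lt (lt_of_le_of_lt hq hj)

lemma eval_reflect {d : ℕ} {q : Polynomial ℝ} (hq : q.natDegree ≤ d) {s : ℝ} (hs : s ≠ 0) :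
    (Polynomial.reflect d q).eval s = s ^ d * q.eval s⁻¹ := by
  rw [Polynomial.eval_eq_sum_range' (lt_of_le_of_lt (natDegree_reflect_le hq) (Nat.lt_succ_self d)),
      Polynomial.eval_eq_sum_range' (lt_of_le_of_lt hq (Nat.lt_succ_self d)), Finset.mul_sum]
  rw [← Finset.sum_range_reflect]
  apply Finset.sum_congr rfl
  intro j hj
  rw [Finset.mem_range] at hj
  have hjd : j ≤ d := by omega
  rw [Polynomial.coeff_reflect, Polynomial.revAt_le (by omega)]
  have : d + 1 - 1 - j = d - j := by omega
  rw [this]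
  have h2 : d - (d - j) = j := by omega
  rw [h2]
  have : s ^ d * (q.coeff j * s⁻¹ ^ j) = q.coeff j * (s ^ d * (s ^ j)⁻¹) := by
    rw [inv_pow]; ring
  rw [this, ← pow_sub₀ s hs hjd]

lemma phi_symm {d : ℕ} {p : MvPolynomial (Fin n) ℝ} (hp : p.IsHomogeneous d)
    (x u : Fin n → ℝ) :
    phi x u p = Polynomial.reflect d (phi u x p) := by
  apply Polynomial.eq_of_infinite_eval_eq
  apply Set.Infinite.mono (s := {s : ℝ | s ≠ 0})
  · intro s hs
    have hs : s ≠ 0 := hs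
    have hdeg : (phi u x p).natDegree ≤ d :=
      le_trans (natDegree_phi_le u x p) (hp.totalDegree_le)
    simp only [Set.mem_setOf_eq]
    rw [eval_reflect hdeg hs, eval_phi, eval_phi]
    have : (fun i => x i + s * u i) = (fun i => s * (u i + s⁻¹ * x i)) := by
      funext i; field_simp; ring
    rw [this, eval_smul_of_homogeneous hp]
  · exact Set.Finite.infinite_compl (Set.finite_singleton 0)

end DDSwapAux

open DDSwapAux

/-- If `p` is a homogeneous polynomial of degree `d` in `n` real variables and `0 ≤ k ≤ d`,
then `(D_u^k p)(x) = (k!/(d−k)!) · (D_x^{d−k} p)(u)`, stated in the cleared-denominator form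
`(d−k)! · (D_u^k p)(x) = k! · (D_x^{d−k} p)(u)`, where `D_a` is the directional derivative
`D_a q = ∑ i, a i • ∂q/∂xᵢ`. -/
theorem directional_derivative_swap {n d : ℕ} (p : MvPolynomial (Fin n) ℝ)
    (hp : p.IsHomogeneous d) (x u : Fin n → ℝ) (k : ℕ) (hk : k ≤ d) :
    ((d - k).factorial : ℝ) *
        MvPolynomial.eval x
          ((fun q : MvPolynomial (Fin n) ℝ => ∑ i, MvPolynomial.C (u i) * MvPolynomial.pderiv i q)^[k] p)
      = (k.factorial : ℝ) *
        MvPolynomial.eval u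
          ((fun q : MvPolynomial (Fin n) ℝ => ∑ i, MvPolynomial.C (x i) * MvPolynomial.pderiv i q)^[d - k] p) := by
  have h1 : MvPolynomial.eval x ((D u)^[k] p) = (k.factorial : ℝ) * (phi x u p).coeff k :=
    (coeff_phi x u k p).symm
  have h2 : MvPolynomial.eval u ((D x)^[d - k] p)
      = ((d - k).factorial : ℝ) * (phi u x p).coeff (d - k) :=
    (coeff_phi u x (d - k) p).symm
  show ((d - k).factorial : ℝ) * MvPolynomial.eval x ((D u)^[k] p)
      = (k.factorial : ℝ) * MvPolynomial.eval u ((D x)^[d - k] p)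
  rw [h1, h2, phi_symm hp x u, Polynomial.coeff_reflect, Polynomial.revAt_le hk]
  ring
end

section
/- Let p₂ be a homogeneous quadratic form in n variables, p₁ a linear form, and p₀ ∈ ℝ, such that the 2×2 symmetric matrix [[p₂(x), p₁(x)], [p₁(x), p₀]] is positive semidefinite for all x ∈ ℝⁿ. Then there exists a 2×(n+1) matrix M(x) with polynomial entries such that M(x)·M(x)ᵀ = [[p₂(x), p₁(x)], [p₁(x), p₀]] for all x. -/
/-!
Put `q = p₂ - p₀⁻¹ p₁²`. Positive semidefiniteness of the `2×2` matrix gives `p₁(x)² ≤ p₀ p₂(x)`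
and `p₂(x) ≥ 0`, so `q` is a nonnegative quadratic form (if `p₀ = 0` then `p₁` vanishes and, as
`0⁻¹ = 0`, `q = p₂`). Writing `q(x) = xᵀ S x` with `S` symmetric, `S` is positive semidefinite,
hence `S = BᵀB` and `q = ∑ₖ (Bx)ₖ²`. The rows `(p₁/√p₀, (Bx)₁, …, (Bx)ₙ)` and `(√p₀, 0, …, 0)`
then form the required matrix.
-/

open MvPolynomial Matrix

open scoped Pointwise in
theorem Finsupp.exists_eq_single_add_single_of_degree_eq_two {σ : Type*} {d : σ →₀ ℕ}
    (hd : d.degree = 2) : ∃ i j, d = single i 1 + single j 1 := by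
  have : d ∈ 2 • (single · 1) '' (Set.univ : Set σ) := by
    rw [nsmul_single_one_image]; simp [hd]
  rw [two_nsmul] at this
  obtain ⟨_, ⟨i, -, rfl⟩, _, ⟨j, -, rfl⟩, h⟩ := this
  exact ⟨i, j, h.symm⟩

namespace MvPolynomial

variable {σ : Type*} [Fintype σ]

section CommRing

variable {R : Type*} [CommRing R]

noncomputable def quadraticOfMatrix : Matrix σ σ R →ₗ[R] MvPolynomial σ R where
  toFun A := ∑ i, ∑ j, C (A i j) * X i * X j
  map_add' A B := by simp only [Matrix.add_apply, C_add, add_mul, Finset.sum_add_distrib]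
  map_smul' c A := by
    simp only [Matrix.smul_apply, smul_eq_mul, C_mul, Finset.smul_sum, smul_eq_C_mul, mul_assoc,
      RingHom.id_apply]

noncomputable def linearOfVec (v : σ → R) : MvPolynomial σ R := ∑ i, C (v i) * X i

theorem quadraticOfMatrix_apply (A : Matrix σ σ R) :
    quadraticOfMatrix A = ∑ i, ∑ j, C (A i j) * X i * X j := rfl

theorem eval_quadraticOfMatrix (A : Matrix σ σ R) (x : σ → R) :
    eval x (quadraticOfMatrix A) = x ⬝ᵥ A *ᵥ x := by
  simp only [quadraticOfMatrix_apply, map_sum, map_mul, eval_C, eval_X, dotProduct, mulVec,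
    Finset.mul_sum]
  refine Finset.sum_congr rfl fun i _ => Finset.sum_congr rfl fun j _ => by ring

theorem quadraticOfMatrix_transpose (A : Matrix σ σ R) :
    quadraticOfMatrix Aᵀ = quadraticOfMatrix A := by
  rw [quadraticOfMatrix_apply, quadraticOfMatrix_apply, Finset.sum_comm]
  simp only [transpose_apply, mul_right_comm]

theorem sum_linearOfVec_sq (B : Matrix σ σ R) :
    ∑ k, linearOfVec (B k) ^ 2 = quadraticOfMatrix (Bᵀ * B) := by
  simp_rw [linearOfVec, sq, Finset.sum_mul_sum, quadraticOfMatrix_apply, mul_apply,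
    transpose_apply, map_sum, Finset.sum_mul]
  rw [Finset.sum_comm]
  refine Finset.sum_congr rfl fun i _ => ?_
  rw [Finset.sum_comm]
  refine Finset.sum_congr rfl fun j _ => Finset.sum_congr rfl fun k _ => ?_
  rw [C_mul]; ring

theorem IsHomogeneous.exists_eq_quadraticOfMatrix [DecidableEq σ] {p : MvPolynomial σ R}
    (hp : p.IsHomogeneous 2) : ∃ A, quadraticOfMatrix A = p := by
  suffices homogeneousSubmodule σ R 2 ≤ LinearMap.range quadraticOfMatrix from this hp
  rw [homogeneousSubmodule_eq_finsupp_supported, AddMonoidAlgebra.supported_eq_span_single,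
    Submodule.span_le]
  rintro _ ⟨d, hd, rfl⟩
  obtain ⟨i, j, rfl⟩ := Finsupp.exists_eq_single_add_single_of_degree_eq_two hd
  refine ⟨single i j 1, ?_⟩
  change _ = monomial _ _
  rw [monomial_add_single, pow_one, ← X.eq_def]
  simp [quadraticOfMatrix_apply, single_apply, apply_ite C, ite_mul, ite_and]

end CommRing

open scoped MatrixOrder in
theorem IsHomogeneous.exists_eq_sum_linearOfVec_sq [DecidableEq σ] {p : MvPolynomial σ ℝ}
    (hp : p.IsHomogeneous 2) (hnonneg : ∀ x, 0 ≤ eval x p) :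
    ∃ B : Matrix σ σ ℝ, p = ∑ k, linearOfVec (B k) ^ 2 := by
  obtain ⟨A, rfl⟩ := hp.exists_eq_quadraticOfMatrix
  set S : Matrix σ σ ℝ := (2⁻¹ : ℝ) • (A + Aᵀ)
  have hS : quadraticOfMatrix S = quadraticOfMatrix A := by
    rw [map_smul, map_add, quadraticOfMatrix_transpose, ← two_smul ℝ, smul_smul]
    norm_num
  have hSpsd : S.PosSemidef := by
    refine .of_dotProduct_mulVec_nonneg ?_ fun x => ?_
    · simp [S, IsHermitian, conjTranspose_eq_transpose_of_trivial, add_comm]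
    · simpa [← eval_quadraticOfMatrix, hS] using hnonneg x
  obtain ⟨B, hB⟩ := CStarAlgebra.nonneg_iff_eq_star_mul_self.mp hSpsd.nonneg
  refine ⟨B, ?_⟩
  rw [sum_linearOfVec_sq, ← hS, hB, star_eq_conjTranspose, conjTranspose_eq_transpose_of_trivial]

end MvPolynomial

theorem Matrix.PosSemidef.sq_le_mul_of_fin_two {a b c : ℝ} (h : (!![a, b; b, c]).PosSemidef) :
    b ^ 2 ≤ a * c := by
  simpa [det_fin_two_of, sq, sub_nonneg] using h.det_nonneg

theorem Matrix.PosSemidef.inv_mul_sq_le_of_fin_two {a b c : ℝ}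
    (h : (!![a, b; b, c]).PosSemidef) : c⁻¹ * b ^ 2 ≤ a := by
  have ha : 0 ≤ a := by simpa using h.diag_nonneg (i := 0)
  have hc : 0 ≤ c := by simpa using h.diag_nonneg (i := 1)
  calc c⁻¹ * b ^ 2 ≤ c⁻¹ * (a * c) := by gcongr; exact h.sq_le_mul_of_fin_two
    _ ≤ a := by
      rcases hc.eq_or_lt with rfl | hc
      · simpa using ha
      · rw [mul_comm a, ← mul_assoc, inv_mul_cancel₀ hc.ne', one_mul]

theorem Matrix.of_vecCons_mul_transpose {R : Type*} [CommRing R] {m : ℕ} (a b : R) (u : Fin m → R) :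
    of ![vecCons a u, vecCons b 0] * (of ![vecCons a u, vecCons b 0])ᵀ =
      !![a * a + u ⬝ᵥ u, a * b; b * a, b * b] := by
  ext i j
  fin_cases i <;> fin_cases j <;> simp [mul_apply, Fin.sum_univ_succ, dotProduct]

/-- If `p₂` is a quadratic form, `p₁` a linear form and `p₀ ∈ ℝ` are such that the
`2×2` symmetric matrix `[[p₂(x), p₁(x)], [p₁(x), p₀]]` is positive semidefinite for all
`x ∈ ℝⁿ`, then there is a `2×(n+1)` polynomial matrix `M` with
`M(x)·M(x)ᵀ = [[p₂(x), p₁(x)], [p₁(x), p₀]]` for all `x`. -/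
theorem psd_two_by_two_polynomial_factorization (n : ℕ)
    (p₂ p₁ : MvPolynomial (Fin n) ℝ) (p₀ : ℝ)
    (h₂ : p₂.IsHomogeneous 2) (h₁ : p₁.IsHomogeneous 1)
    (hpsd : ∀ x : Fin n → ℝ,
      (!![MvPolynomial.eval x p₂, MvPolynomial.eval x p₁;
          MvPolynomial.eval x p₁, p₀]).PosSemidef) :
    ∃ M : Matrix (Fin 2) (Fin (n + 1)) (MvPolynomial (Fin n) ℝ),
      ∀ x : Fin n → ℝ,
        (MvPolynomial.eval x ((M * M.transpose) 0 0) = MvPolynomial.eval x p₂) ∧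
        (MvPolynomial.eval x ((M * M.transpose) 0 1) = MvPolynomial.eval x p₁) ∧
        (MvPolynomial.eval x ((M * M.transpose) 1 0) = MvPolynomial.eval x p₁) ∧
        (MvPolynomial.eval x ((M * M.transpose) 1 1) = p₀) := by
  have hp₀ : 0 ≤ p₀ := by simpa using (hpsd 0).diag_nonneg (i := 1)
  have hp₁ : p₀ = 0 → ∀ x, eval x p₁ = 0 := fun h x => by
    have := (hpsd x).sq_le_mul_of_fin_two
    rw [h, mul_zero] at this
    exact pow_eq_zero_iff two_ne_zero |>.mp (le_antisymm this (sq_nonneg _))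
  obtain ⟨B, hB⟩ := (h₂.sub ((h₁.pow 2).C_mul p₀⁻¹)).exists_eq_sum_linearOfVec_sq
    fun x => by simpa using (hpsd x).inv_mul_sq_le_of_fin_two
  refine ⟨of ![vecCons (C (√p₀)⁻¹ * p₁) fun k => linearOfVec (B k), vecCons (C √p₀) 0],
    fun x => ?_⟩
  have hsqrt : √p₀ * √p₀ = p₀ := Real.mul_self_sqrt hp₀
  have hcancel : (√p₀)⁻¹ * eval x p₁ * √p₀ = eval x p₁ := by
    rcases hp₀.eq_or_lt with h | h
    · simp [hp₁ h.symm x]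
    · field_simp
  have hsum : (fun k => linearOfVec (B k)) ⬝ᵥ (fun k => linearOfVec (B k)) =
      p₂ - C p₀⁻¹ * p₁ ^ 2 := by
    rw [hB]
    simp only [dotProduct, sq]
  rw [of_vecCons_mul_transpose]
  simp only [of_apply, cons_val', cons_val_zero, cons_val_one, empty_val', cons_val_fin_one,
    map_add, map_mul, map_sub, map_pow, eval_C, hsum]
  have hinv : p₀⁻¹ = (√p₀)⁻¹ * (√p₀)⁻¹ := by rw [← mul_inv, hsqrt]
  exact ⟨by rw [hinv]; ring, hcancel, by linear_combination hcancel, hsqrt⟩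
end

section
/- Let q be a quadratic form on ℝⁿ and l a linear form on ℝⁿ. If q(x) ≥ 0 for every x with l(x) = 0, then there exists a nonnegative quadratic form s (hence a sum of squares of linear forms) and a linear form α such that q(x) = s(x) + l(x)·α(x) for all x ∈ ℝⁿ. -/
open MvPolynomial

private lemma degree_one_single {σ : Type*} {d : σ →₀ ℕ} (hd : d.degree = 1) :
    ∃ i, d = Finsupp.single i 1 := by
  classical
  have hne : d ≠ 0 := by rintro rfl; simp [map_zero] at hd
  obtain ⟨i, hi⟩ := Finsupp.support_nonempty_iff.mpr hne
  have hi1 : d i = 1 :=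
    le_antisymm (hd ▸ Finsupp.le_degree i d)
      (Nat.one_le_iff_ne_zero.mpr (Finsupp.mem_support_iff.mp hi))
  refine ⟨i, ?_⟩
  ext j
  rcases eq_or_ne j i with rfl | hji
  · simp [hi1]
  · rw [Finsupp.single_apply, if_neg (Ne.symm hji)]
    by_contra hj
    have hjs : j ∈ d.support := Finsupp.mem_support_iff.mpr hj
    have hsub : ({i, j} : Finset σ) ⊆ d.support := by
      intro k hk
      simp only [Finset.mem_insert, Finset.mem_singleton] at hk
      rcases hk with rfl | rfl <;> assumption
    have h2 : 2 ≤ d.degree := by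
      have := Finset.sum_le_sum_of_subset (f := fun k => d k) hsub
      rw [Finset.sum_pair (Ne.symm hji)] at this
      have : d i + d j ≤ d.degree := this
      omega
    omega

private lemma eval_lin {n : ℕ} {l : MvPolynomial (Fin n) ℝ} (hl : l.IsHomogeneous 1)
    (a b : ℝ) (x y : Fin n → ℝ) :
    eval (fun i => a * x i + b * y i) l = a * eval x l + b * eval y l := by
  conv_lhs => rw [l.as_sum]
  conv_rhs => rw [l.as_sum]
  rw [map_sum, map_sum, map_sum, Finset.mul_sum, Finset.mul_sum, ← Finset.sum_add_distrib]
  refine Finset.sum_congr rfl fun d hd => ?_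
  have hdeg : d.degree = 1 := by
    rw [Finsupp.degree_eq_weight_one]
    exact hl (MvPolynomial.mem_support_iff.mp hd)
  obtain ⟨i, rfl⟩ := degree_one_single hdeg
  simp only [eval_monomial, Finsupp.prod_single_index, pow_zero, pow_one]
  ring

private lemma dvd_sub_bind {n : ℕ} (l : MvPolynomial (Fin n) ℝ) (e : Fin n → ℝ)
    (p : MvPolynomial (Fin n) ℝ) :
    l ∣ p - bind₁ (fun i => X i - C (e i) * l) p := by
  set I := Ideal.span ({l} : Set (MvPolynomial (Fin n) ℝ))
  have hlI : Ideal.Quotient.mk I l = 0 :=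
    Ideal.Quotient.eq_zero_iff_mem.mpr (Ideal.subset_span rfl)
  have key : (Ideal.Quotient.mkₐ ℝ I).comp (bind₁ (fun i => X i - C (e i) * l)) =
      Ideal.Quotient.mkₐ ℝ I := by
    apply MvPolynomial.algHom_ext
    intro i
    simp [bind₁_X_right, hlI]
  have h : Ideal.Quotient.mk I (p - bind₁ (fun i => X i - C (e i) * l) p) = 0 := by
    have := congrArg (fun f => f p) key
    simp only [AlgHom.comp_apply, Ideal.Quotient.mkₐ_eq_mk] at this
    rw [map_sub, this, sub_self]
  rw [Ideal.Quotient.eq_zero_iff_mem] at h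
  exact (Ideal.mem_span_singleton).mp h

/-- If a quadratic form `q` is nonnegative on the hyperplane `{x : l(x) = 0}` cut out by a
linear form `l`, then `q = s + l·α` for some nonnegative quadratic form `s` and linear
form `α`. -/
theorem quadratic_nonneg_on_hyperplane_decomposition (n : ℕ)
    (q l : MvPolynomial (Fin n) ℝ)
    (hq : q.IsHomogeneous 2) (hl : l.IsHomogeneous 1)
    (hnn : ∀ x : Fin n → ℝ, MvPolynomial.eval x l = 0 → 0 ≤ MvPolynomial.eval x q) :
    ∃ s α : MvPolynomial (Fin n) ℝ,
      s.IsHomogeneous 2 ∧ (∀ x : Fin n → ℝ, 0 ≤ MvPolynomial.eval x s) ∧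
      α.IsHomogeneous 1 ∧ q = s + l * α := by
  by_cases hl0 : l = 0
  · exact ⟨q, 0, hq, fun x => hnn x (by simp [hl0]), isHomogeneous_zero _ _ 1, by simp⟩
  -- find e with eval e l = 1
  obtain ⟨e0, he0⟩ : ∃ e0 : Fin n → ℝ, eval e0 l ≠ 0 := by
    by_contra h
    push_neg at h
    exact hl0 (hl.eq_zero_of_forall_eval_eq_zero h)
  set c : ℝ := eval e0 l with hc
  set e : Fin n → ℝ := fun i => c⁻¹ * e0 i with he
  have heval_e : eval e l = 1 := by
    have := eval_lin hl c⁻¹ 0 e0 e0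
    simp only [zero_mul, add_zero] at this
    rw [he, this, ← hc, inv_mul_cancel₀ he0]
  set f : Fin n → MvPolynomial (Fin n) ℝ := fun i => X i - C (e i) * l with hf
  set s : MvPolynomial (Fin n) ℝ := bind₁ f q with hs
  have hf1 : ∀ i, (f i).IsHomogeneous 1 := fun i =>
    (isHomogeneous_X _ _).sub (hl.C_mul (e i))
  have hs2 : s.IsHomogeneous 2 := by
    have h := hq.aeval f hf1
    rw [one_mul] at h
    exact h
  have hsnn : ∀ x : Fin n → ℝ, 0 ≤ eval x s := by
    intro x
    set t : ℝ := eval x l with ht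
    set y : Fin n → ℝ := fun i => x i - t * e i with hy
    have hyl : eval y l = 0 := by
      have := eval_lin hl 1 (-t) x e
      simp only [one_mul, neg_mul] at this
      have hyy : y = fun i => x i + -(t * e i) := by funext i; simp [hy]; ring
      rw [hyy]
      rw [this, heval_e]
      ring
    have hseval : eval x s = eval y q := by
      have h1 : eval x (bind₁ f q) = eval (fun i => eval x (f i)) q :=
        eval₂Hom_bind₁ (RingHom.id ℝ) x f q
      have h2 : (fun i => eval x (f i)) = y := by
        funext i
        simp only [hf, hy, ht, map_sub, eval_X, eval_mul, eval_C]
        ring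
      rw [hs, h1, h2]
    rw [hseval]
    exact hnn y hyl
  obtain ⟨β, hβ⟩ := dvd_sub_bind l e q
  have hqs : q = s + l * β := by rw [hs, hf]; linear_combination hβ
  have hlβ2 : (l * β).IsHomogeneous 2 := by
    have : l * β = q - s := by rw [hqs]; ring
    rw [this]; exact hq.sub hs2
  -- replace β by its degree-1 homogeneous component
  set α : MvPolynomial (Fin n) ℝ := homogeneousComponent 1 β with hα
  have hmul : l * α = l * β := by
    classical
    have hβsum : β = ∑ k ∈ Finset.range (β.totalDegree + 2), homogeneousComponent k β := by
      conv_lhs => rw [← sum_homogeneousComponent β]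
      apply Finset.sum_subset
      · intro k hk; simp only [Finset.mem_range] at *; omega
      · intro k hk1 hk2
        simp only [Finset.mem_range, not_lt] at hk1 hk2
        exact homogeneousComponent_eq_zero k β (by omega)
    have hexp : l * β = ∑ k ∈ Finset.range (β.totalDegree + 2),
        l * homogeneousComponent k β := by
      rw [← Finset.mul_sum, ← hβsum]
    have hcomp : homogeneousComponent 2 (l * β) = l * β :=
      homogeneousComponent_of_mem hlβ2 ▸ if_pos rfl ▸ rfl
    calc l * α = homogeneousComponent 2 (l * β) := by
          rw [hexp, map_sum]
          rw [Finset.sum_eq_single 1]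
          · have h1 : (l * homogeneousComponent 1 β) ∈ homogeneousSubmodule (Fin n) ℝ 2 :=
              hl.mul (homogeneousComponent_isHomogeneous 1 β)
            rw [homogeneousComponent_of_mem h1, if_pos rfl, hα]
          · intro k _ hk
            have h1 : (l * homogeneousComponent k β) ∈ homogeneousSubmodule (Fin n) ℝ (1 + k) :=
              hl.mul (homogeneousComponent_isHomogeneous k β)
            rw [homogeneousComponent_of_mem h1, if_neg (by omega)]
          · intro h1
            simp only [Finset.mem_range] at h1
            omega
      _ = l * β := hcomp
  exact ⟨s, α, hs2, hsnn, homogeneousComponent_isHomogeneous 1 β, by rw [hqs, hmul]⟩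
end

section
/- For all integers y ≥ 2, m ≥ 2, and 1 ≤ d, k, μ with (μ−1)k = y, μ ≤ d ≤ 2μ−3, and m > 10y² − 2y + 1, the inequality binom(2y+m−1, m−1) > Σ_{i=0}^{μ−1} binom(m+ik−1, m−1) + Σ_{i=0}^{d} binom(m+ik−1, m−1) + Σ_{i=0}^{d−1} binom(m+ik−1, m−1) holds. -/
/-- For integers `y ≥ 2`, `m ≥ 2`, `d, k, μ ≥ 1` with `(μ−1)k = y`, `μ ≤ d ≤ 2μ−3` and
`m > 10y² − 2y + 1`, the inequality
`binom(2y+m−1, m−1) > Σ_{i=0}^{μ−1} binom(m+ik−1, m−1) + Σ_{i=0}^{d} binom(m+ik−1, m−1)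
  + Σ_{i=0}^{d−1} binom(m+ik−1, m−1)` holds. -/
theorem bezoutian_dimension_inequality (y m d k μ : ℕ)
    (hy : 2 ≤ y) (hm2 : 2 ≤ m) (hd : 1 ≤ d) (hk : 1 ≤ k) (hμ : 1 ≤ μ)
    (hμky : (μ - 1) * k = y) (hμd : μ ≤ d) (hdμ : d ≤ 2 * μ - 3)
    (hm : 10 * y ^ 2 - 2 * y + 1 < m) :
    (∑ i ∈ Finset.range μ, (m + i * k - 1).choose (m - 1))
      + (∑ i ∈ Finset.range (d + 1), (m + i * k - 1).choose (m - 1))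
      + (∑ i ∈ Finset.range d, (m + i * k - 1).choose (m - 1))
      < (2 * y + m - 1).choose (m - 1) := by
  have hμ3 : 3 ≤ μ := by omega
  have hμy : μ - 1 ≤ y := by
    have h1 : (μ - 1) * 1 ≤ (μ - 1) * k := Nat.mul_le_mul_left _ hk
    omega
  set C := (m + 2 * y - 2).choose (m - 1) with hCdef
  have hdk : d * k ≤ 2 * y - 1 := by
    have h1 : d * k ≤ (2 * μ - 3) * k := Nat.mul_le_mul_right k hdμ
    have h2 : (2 * μ - 3) * k + k = 2 * y := by
      have h3 : (2 * μ - 3) + 1 = 2 * (μ - 1) := by omega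
      calc (2 * μ - 3) * k + k = ((2 * μ - 3) + 1) * k := by ring
        _ = 2 * (μ - 1) * k := by rw [h3]
        _ = 2 * y := by rw [mul_assoc, hμky]
    omega
  have hterm : ∀ i ≤ d, (m + i * k - 1).choose (m - 1) ≤ C := by
    intro i hi
    apply Nat.choose_le_choose
    have h1 : i * k ≤ d * k := Nat.mul_le_mul_right k hi
    omega
  have hsum : ∀ n ≤ d + 1, (∑ i ∈ Finset.range n, (m + i * k - 1).choose (m - 1)) ≤ n * C := by
    intro n hn
    calc (∑ i ∈ Finset.range n, (m + i * k - 1).choose (m - 1))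
        ≤ (Finset.range n).card • C := by
          apply Finset.sum_le_card_nsmul
          intro i hi
          simp only [Finset.mem_range] at hi
          exact hterm i (by omega)
      _ = n * C := by simp [smul_eq_mul]
  have hLHS : (∑ i ∈ Finset.range μ, (m + i * k - 1).choose (m - 1))
      + (∑ i ∈ Finset.range (d + 1), (m + i * k - 1).choose (m - 1))
      + (∑ i ∈ Finset.range d, (m + i * k - 1).choose (m - 1)) ≤ 5 * y * C := by
    have h1 := hsum μ (by omega)
    have h2 := hsum (d + 1) (by omega)
    have h3 := hsum d (by omega)
    have hcount : μ + (d + 1) + d ≤ 5 * y := by omega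
    calc _ ≤ μ * C + (d + 1) * C + d * C := by
          exact Nat.add_le_add (Nat.add_le_add h1 h2) h3
      _ = (μ + (d + 1) + d) * C := by ring
      _ ≤ 5 * y * C := Nat.mul_le_mul_right C hcount
  have hCpos : 0 < C := Nat.choose_pos (by omega)
  -- key identity : 2y * RHS = (m + 2y - 1) * C
  have hsym1 : (2 * y + m - 1).choose (m - 1) = (2 * y + m - 1).choose (2 * y) := by
    rw [← Nat.choose_symm (by omega : m - 1 ≤ 2 * y + m - 1)]
    congr 1
    omega
  have hsym2 : C = (m + 2 * y - 2).choose (2 * y - 1) := by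
    rw [hCdef, ← Nat.choose_symm (by omega : m - 1 ≤ m + 2 * y - 2)]
    congr 1
    omega
  have hid := Nat.add_one_mul_choose_eq (m + 2 * y - 2) (2 * y - 1)
  have hkey : (2 * y) * (2 * y + m - 1).choose (m - 1) = (m + 2 * y - 1) * C := by
    rw [hsym1, hsym2]
    have e1 : (m + 2 * y - 2).succ = m + 2 * y - 1 := by omega
    have e2 : (2 * y - 1) + 1 = 2 * y := by omega
    rw [e2] at hid
    have e4 : m + 2 * y - 2 + 1 = m + 2 * y - 1 := by omega
    rw [e4] at hid
    have e3 : 2 * y + m - 1 = m + 2 * y - 1 := by omega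
    rw [e3, hid]
    ring
  have h2y : 2 * y ≤ 10 * y ^ 2 := by nlinarith
  have h10 : 10 * y ^ 2 < m + 2 * y - 1 := by
    set T := 10 * y ^ 2 with hT
    clear_value T
    omega
  have hfin : (2 * y) * (5 * y * C) < (2 * y) * (2 * y + m - 1).choose (m - 1) := by
    rw [hkey]
    calc (2 * y) * (5 * y * C) = (10 * y ^ 2) * C := by ring
      _ < (m + 2 * y - 1) * C := (Nat.mul_lt_mul_right hCpos).mpr h10
  have := Nat.lt_of_mul_lt_mul_left hfin
  omega
end

section
/- Let q be a nonzero nonnegative homogeneous polynomial of degree 2d in n variables, let V(q) = {x ∈ ℝⁿ : q(x) = 0}, and let L_q = {p homogeneous of degree 2d : ∇p(x) = 0 for all x ∈ V(q)}. If L_q ⊆ span(q), then q generates an extreme ray of the cone of nonnegative forms of degree 2d in n variables. -/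
open MvPolynomial

private lemma aux_eval {n : ℕ} (t : ℝ) (φ : Fin n → Polynomial ℝ) (p : MvPolynomial (Fin n) ℝ) :
    Polynomial.eval t (aeval φ p) = eval (fun j => Polynomial.eval t (φ j)) p := by
  induction p using MvPolynomial.induction_on with
  | C a => simp
  | add p q hp hq => simp [hp, hq]
  | mul_X p j hp => simp [hp]

private lemma aux_chain {n : ℕ} (x : Fin n → ℝ) (i : Fin n) (p : MvPolynomial (Fin n) ℝ) :
    Polynomial.derivative
        (aeval (fun j => Polynomial.C (x j) + if j = i then Polynomial.X else 0) p)
      = aeval (fun j => Polynomial.C (x j) + if j = i then Polynomial.X else 0)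
          (pderiv i p) := by
  set φ : Fin n → Polynomial ℝ :=
    fun j => Polynomial.C (x j) + if j = i then Polynomial.X else 0 with hφ
  induction p using MvPolynomial.induction_on with
  | C a => simp
  | add p q hp hq => simp [hp, hq]
  | mul_X p j hp =>
    have : pderiv i (p * X j) = pderiv i p * X j + p * pderiv i (X j) := pderiv_mul
    rw [map_mul, Polynomial.derivative_mul, hp, this, map_add, map_mul, map_mul]
    by_cases h : j = i
    · subst h
      simp [φ, pderiv_X_self]
    · simp [φ, h, pderiv_X_of_ne h]

private lemma aux_deriv_zero (g : Polynomial ℝ) (hnn : ∀ t, 0 ≤ g.eval t)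
    (h0 : g.eval 0 = 0) : (Polynomial.derivative g).eval 0 = 0 := by
  have hmin : IsLocalMin (fun t => g.eval t) 0 :=
    Filter.Eventually.of_forall fun t => by simp only [h0]; exact hnn t
  have := hmin.deriv_eq_zero
  rwa [Polynomial.deriv] at this

/-- Let `q ≠ 0` be a nonnegative homogeneous polynomial of degree `2d` in `n` variables,
`V(q) = {x : q(x) = 0}` and `L_q` the space of forms of degree `2d` whose gradient vanishes
on `V(q)`. If `L_q ⊆ span(q)`, then `q` generates an extreme ray of the cone of nonnegative
forms of degree `2d`: whenever `q = q₁ + q₂` with `q₁, q₂` nonnegative forms of degree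
`2d`, both `q₁, q₂` are nonnegative multiples of `q`. -/
theorem extreme_ray_of_gradient_condition (n d : ℕ) (q : MvPolynomial (Fin n) ℝ)
    (hq : q.IsHomogeneous (2 * d)) (hq0 : q ≠ 0)
    (hqnn : ∀ x : Fin n → ℝ, 0 ≤ MvPolynomial.eval x q)
    (hL : ∀ p : MvPolynomial (Fin n) ℝ, p.IsHomogeneous (2 * d) →
      (∀ x : Fin n → ℝ, MvPolynomial.eval x q = 0 →
        ∀ i : Fin n, MvPolynomial.eval x (MvPolynomial.pderiv i p) = 0) →
      ∃ c : ℝ, p = c • q) :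
    ∀ q₁ q₂ : MvPolynomial (Fin n) ℝ,
      q₁.IsHomogeneous (2 * d) → q₂.IsHomogeneous (2 * d) →
      (∀ x : Fin n → ℝ, 0 ≤ MvPolynomial.eval x q₁) →
      (∀ x : Fin n → ℝ, 0 ≤ MvPolynomial.eval x q₂) →
      q = q₁ + q₂ →
      (∃ c : ℝ, 0 ≤ c ∧ q₁ = c • q) ∧ (∃ c : ℝ, 0 ≤ c ∧ q₂ = c • q) := by
  intro q₁ q₂ h₁ h₂ hnn₁ hnn₂ hsum
  -- gradient of q₁ vanishes on V(q)
  have grad : ∀ x : Fin n → ℝ, eval x q = 0 → ∀ i, eval x (pderiv i q₁) = 0 := by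
    intro x hx i
    have hsumx : eval x q₁ + eval x q₂ = 0 := by
      rw [hsum] at hx; simpa using hx
    have h0 : eval x q₁ = 0 := by
      have := hnn₁ x; have := hnn₂ x; linarith
    set φ : Fin n → Polynomial ℝ :=
      fun j => Polynomial.C (x j) + if j = i then Polynomial.X else 0 with hφ
    have hg : ∀ t : ℝ, Polynomial.eval t (aeval φ q₁)
        = eval (fun j => x j + if j = i then t else 0) q₁ := by
      intro t
      rw [aux_eval]
      have : (fun j => Polynomial.eval t (φ j)) = fun j => x j + if j = i then t else 0 := by
        funext j; by_cases h : j = i <;> simp [φ, h]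
      rw [this]
    have hgnn : ∀ t, 0 ≤ (aeval φ q₁).eval t := fun t => by
      rw [hg]; exact hnn₁ _
    have hg0 : (aeval φ q₁).eval 0 = 0 := by
      rw [hg]
      have : (fun j => x j + if j = i then (0:ℝ) else 0) = x := by
        funext j; by_cases h : j = i <;> simp [h]
      rw [this, h0]
    have hd := aux_deriv_zero _ hgnn hg0
    rw [aux_chain, aux_eval] at hd
    have hx' : (fun j => Polynomial.eval 0 (φ j)) = x := by
      funext j; by_cases h : j = i <;> simp [φ, h]
    rwa [hx'] at hd
  obtain ⟨c, hc⟩ := hL q₁ h₁ grad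
  -- find a point where q is positive
  have hx₀ : ∃ x₀ : Fin n → ℝ, eval x₀ q ≠ 0 := by
    by_contra h
    push_neg at h
    exact hq0 (MvPolynomial.funext fun x => by simp [h x])
  obtain ⟨x₀, hx₀⟩ := hx₀
  have hpos : 0 < eval x₀ q := lt_of_le_of_ne (hqnn x₀) (Ne.symm hx₀)
  have heval₁ : eval x₀ q₁ = c * eval x₀ q := by
    rw [hc]; simp [MvPolynomial.smul_eq_C_mul]
  have hc0 : 0 ≤ c := by
    have := hnn₁ x₀
    rw [heval₁] at this
    nlinarith
  have hq₂ : q₂ = (1 - c) • q := by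
    have : q₂ = q - q₁ := by rw [hsum]; ring
    rw [this, hc, sub_smul, one_smul]
  have hc1 : 0 ≤ 1 - c := by
    have := hnn₂ x₀
    rw [hq₂] at this
    simp only [MvPolynomial.smul_eq_C_mul, map_mul, eval_C] at this
    nlinarith
  exact ⟨⟨c, hc0, hc⟩, ⟨1 - c, hc1, hq₂⟩⟩
end
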